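/- Let C be a normed *-algebra, A ⊆ C a *-subalgebra and X ⊆ C a linear subspace with AX ⊆ X, XA ⊆ X, X*X ⊆ A, XX* ⊆ A. Define X^k for k ∈ ℤ by X^k = X·X···X (k times, closed-span product) for k ≥ 1, X^0 = A, and X^k = (X*)^{-k} for k ≤ -1. Then X^k · X^l ⊆ closure(X^{k+l}) for all k, l ∈ ℤ. -/

import Mathlib

variable {C : Type*} [NonUnitalNormedRing C] [StarRing C] [NormedSpace ℂ C]
  [IsScalarTower ℂ C C] [SMulCommClass ℂ C C] [StarModule ℂ C] [NormedStarGroup C]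

/-- `mulSpan X Y` is the closed linear span of the elementwise products `{x * y}`. -/
def mulSpan (X Y : Set C) : Set C :=
  closure (Submodule.span ℂ {z : C | ∃ x ∈ X, ∃ y ∈ Y, z = x * y} : Set C)

/-- `addCl X Y` is the closure of the set of elementwise sums. -/
def addCl (X Y : Set C) : Set C :=
  closure {z : C | ∃ x ∈ X, ∃ y ∈ Y, z = x + y}

/-- `sumCl X` is the closure of the set of finite sums from the family `X`. -/
def sumCl {ι : Type*} (X : ι → Set C) : Set C :=
  closure {z : C | ∃ (s : Finset ι) (f : ι → C), (∀ i ∈ s, f i ∈ X i) ∧ z = ∑ i ∈ s, f i}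

/-- `npowSet X n` is the `(n+1)`-fold closed-span product `X · X ⋯ X`. -/
def npowSet (X : Set C) : ℕ → Set C
  | 0 => X
  | n + 1 => mulSpan (npowSet X n) X

/-- Integer powers: `X^k` for `k ≥ 1`, `X^0 = A`, `X^k = (X*)^(-k)` for `k ≤ -1`. -/
def zpowSet (A X : Set C) (k : ℤ) : Set C :=
  if k = 0 then A
  else if 0 < k then npowSet X (k.toNat - 1)
  else npowSet ((star ·) '' X) ((-k).toNat - 1)

/-!
Right multiplication by `A` keeps the degree of `X^k`, right multiplication by `X` raises it
by one and right multiplication by `X⋆` lowers it by one, each up to closure. The only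
non-trivial instances are `X^n · X⋆ ⊆ X^(n-1) · (X X⋆) ⊆ closure (X^(n-1) A)` and its mirror
`(X⋆)^n · X`, which is the same statement for `X⋆` in place of `X`. The closed-span product is
associative and insensitive to closures of its factors, so multiplying by `X^l` amounts to `|l|`
such steps.
-/

lemma Int.eq_zero_or_eq_natCast_succ_or_eq_neg_natCast_succ (k : ℤ) :
    k = 0 ∨ (∃ n : ℕ, k = n + 1) ∨ ∃ n : ℕ, k = -(n + 1) := by
  rcases lt_trichotomy k 0 with hk | rfl | hk
  · exact Or.inr (Or.inr ⟨(-k).toNat - 1, by omega⟩)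
  · exact Or.inl rfl
  · exact Or.inr (Or.inl ⟨k.toNat - 1, by omega⟩)

section mulSpan

omit [StarRing C] [IsScalarTower ℂ C C] [SMulCommClass ℂ C C] [StarModule ℂ C] [NormedStarGroup C]

variable {X Y X' Y' : Set C}

lemma mul_mem_mulSpan {x y : C} (hx : x ∈ X) (hy : y ∈ Y) : x * y ∈ mulSpan X Y :=
  subset_closure (Submodule.subset_span ⟨x, hx, y, hy, rfl⟩)

lemma isClosed_mulSpan : IsClosed (mulSpan X Y) :=
  isClosed_closure

def mulSpanSubmodule (X Y : Set C) : Submodule ℂ C :=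
  (Submodule.span ℂ {z | ∃ x ∈ X, ∃ y ∈ Y, z = x * y}).topologicalClosure

lemma mulSpan_subset_of_mul_mem {M : Submodule ℂ C} (hM : IsClosed (M : Set C))
    (h : ∀ x ∈ X, ∀ y ∈ Y, x * y ∈ M) : mulSpan X Y ⊆ M :=
  closure_minimal (Submodule.span_le.2 (by rintro _ ⟨x, hx, y, hy, rfl⟩; exact h x hx y hy)) hM

lemma mulSpan_subset_closure {S : Type*} [SetLike S C] [AddSubmonoidClass S C]
    [SMulMemClass S ℂ C] {M : S} (h : ∀ x ∈ X, ∀ y ∈ Y, x * y ∈ M) :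
    mulSpan X Y ⊆ closure M :=
  closure_mono fun _ hz => Submodule.span_induction (fun _ ⟨x, hx, y, hy, e⟩ => e ▸ h x hx y hy)
    (zero_mem M) (fun _ _ _ _ => add_mem) (fun c _ _ => SMulMemClass.smul_mem c) hz

lemma mulSpan_subset_mulSpan (h : ∀ x ∈ X, ∀ y ∈ Y, x * y ∈ mulSpan X' Y') :
    mulSpan X Y ⊆ mulSpan X' Y' :=
  mulSpan_subset_of_mul_mem (M := mulSpanSubmodule X' Y') isClosed_mulSpan h

lemma mulSpan_mono (hX : X ⊆ X') (hY : Y ⊆ Y') : mulSpan X Y ⊆ mulSpan X' Y' :=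
  mulSpan_subset_mulSpan fun _ hx _ hy => mul_mem_mulSpan (hX hx) (hY hy)

lemma mulSpan_closure_left : mulSpan (closure X) Y = mulSpan X Y := by
  refine (mulSpan_subset_mulSpan fun x hx y hy => ?_).antisymm
    (mulSpan_mono subset_closure subset_rfl)
  have : x * y ∈ closure (mulSpan X Y) :=
    map_mem_closure (f := (· * y)) (continuous_mul_const y) hx fun _ hw => mul_mem_mulSpan hw hy
  rwa [isClosed_mulSpan.closure_eq] at this

lemma mulSpan_closure_right : mulSpan X (closure Y) = mulSpan X Y := by
  refine (mulSpan_subset_mulSpan fun x hx y hy => ?_).antisymm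
    (mulSpan_mono subset_rfl subset_closure)
  have : x * y ∈ closure (mulSpan X Y) :=
    map_mem_closure (f := (x * ·)) (continuous_const_mul x) hy fun _ hw => mul_mem_mulSpan hx hw
  rwa [isClosed_mulSpan.closure_eq] at this

end mulSpan

section mulSpanAssoc

omit [StarRing C] [StarModule ℂ C] [NormedStarGroup C]

variable {X Y Z : Set C}

lemma mulSpan_assoc : mulSpan (mulSpan X Y) Z = mulSpan X (mulSpan Y Z) := by
  apply Set.Subset.antisymm
  · refine mulSpan_subset_mulSpan fun p hp z hz => ?_
    have : mulSpan X Y ⊆ (mulSpanSubmodule X (mulSpan Y Z)).comap (LinearMap.mulRight ℂ z) :=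
      mulSpan_subset_of_mul_mem (isClosed_mulSpan.preimage (continuous_mul_const z))
        fun x hx y hy => by
          rw [Submodule.mem_comap, LinearMap.mulRight_apply, mul_assoc]
          exact mul_mem_mulSpan hx (mul_mem_mulSpan hy hz)
    exact this hp
  · refine mulSpan_subset_mulSpan fun x hx p hp => ?_
    have : mulSpan Y Z ⊆ (mulSpanSubmodule (mulSpan X Y) Z).comap (LinearMap.mulLeft ℂ x) :=
      mulSpan_subset_of_mul_mem (isClosed_mulSpan.preimage (continuous_const_mul x))
        fun y hy z hz => by
          rw [Submodule.mem_comap, LinearMap.mulLeft_apply, ← mul_assoc]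
          exact mul_mem_mulSpan (mul_mem_mulSpan hx hy) hz
    exact this hp

lemma mulSpan_npowSet_subset_closure {M : Submodule ℂ C} {T : Set C}
    (h : ∀ x ∈ M, ∀ t ∈ T, x * t ∈ M) : ∀ n, mulSpan (npowSet M n) T ⊆ closure (npowSet M n)
  | 0 => mulSpan_subset_closure h
  | n + 1 => calc
      mulSpan (mulSpan (npowSet M n) M) T = mulSpan (npowSet M n) (mulSpan M T) := mulSpan_assoc
      _ ⊆ mulSpan (npowSet M n) (closure M) := mulSpan_mono subset_rfl (mulSpan_subset_closure h)
      _ = npowSet M (n + 1) := mulSpan_closure_right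
      _ ⊆ closure (npowSet M (n + 1)) := subset_closure

lemma mulSpan_npowSet_subset_of_mulSpan_subset {Z : ℤ → Set C} {S : Set C} {d : ℤ}
    (h : ∀ j, mulSpan (Z j) S ⊆ closure (Z (j + d))) (j : ℤ) :
    ∀ n : ℕ, mulSpan (Z j) (npowSet S n) ⊆ closure (Z (j + (n + 1) * d))
  | 0 => by simpa [npowSet] using h j
  | n + 1 => calc
      mulSpan (Z j) (mulSpan (npowSet S n) S) = mulSpan (mulSpan (Z j) (npowSet S n)) S :=
        mulSpan_assoc.symm
      _ ⊆ mulSpan (closure (Z (j + (n + 1) * d))) S :=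
        mulSpan_mono (mulSpan_npowSet_subset_of_mulSpan_subset h j n) subset_rfl
      _ = mulSpan (Z (j + (n + 1) * d)) S := mulSpan_closure_left
      _ ⊆ closure (Z (j + (n + 1) * d + d)) := h _
      _ = closure (Z (j + ((n + 1 : ℕ) + 1) * d)) := by push_cast; ring_nf

end mulSpanAssoc

section zpowSet

omit [IsScalarTower ℂ C C] [SMulCommClass ℂ C C] [StarModule ℂ C] [NormedStarGroup C]

lemma zpowSet_zero (A X : Set C) : zpowSet A X 0 = A := by
  simp [zpowSet]

lemma zpowSet_natCast_succ (A X : Set C) (n : ℕ) : zpowSet A X (n + 1) = npowSet X n := by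
  rw [zpowSet, if_neg (by omega), if_pos (by omega)]
  congr

lemma zpowSet_neg_natCast_succ (A X : Set C) (n : ℕ) :
    zpowSet A X (-(n + 1)) = npowSet ((star ·) '' X) n := by
  rw [zpowSet, if_neg (by omega), if_neg (by omega)]
  congr

lemma zpowSet_star_neg (A X : Set C) (k : ℤ) : zpowSet A ((star ·) '' X) (-k) = zpowSet A X k := by
  rcases k.eq_zero_or_eq_natCast_succ_or_eq_neg_natCast_succ with rfl | ⟨n, rfl⟩ | ⟨n, rfl⟩
  · simp only [neg_zero, zpowSet_zero]
  · rw [zpowSet_natCast_succ, zpowSet_neg_natCast_succ, Set.image_image]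
    simp only [star_star, Set.image_id']
  · rw [neg_neg, zpowSet_natCast_succ, zpowSet_neg_natCast_succ]

end zpowSet

section starSubmodule

omit [IsScalarTower ℂ C C] [SMulCommClass ℂ C C] [NormedStarGroup C]

def starSubmodule (X : Submodule ℂ C) : Submodule ℂ C where
  carrier := (star ·) '' (X : Set C)
  add_mem' := by
    rintro _ _ ⟨x, hx, rfl⟩ ⟨y, hy, rfl⟩
    exact ⟨x + y, X.add_mem hx hy, star_add x y⟩
  zero_mem' := ⟨0, X.zero_mem, star_zero C⟩
  smul_mem' := by
    rintro c _ ⟨x, hx, rfl⟩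
    exact ⟨star c • x, X.smul_mem _ hx, by simp [star_smul]⟩

@[simp]
lemma coe_starSubmodule (X : Submodule ℂ C) :
    (starSubmodule X : Set C) = (star ·) '' (X : Set C) :=
  rfl

lemma mul_mem_starSubmodule {A : NonUnitalStarSubalgebra ℂ C} {X : Submodule ℂ C}
    (hAX : ∀ a ∈ A, ∀ x ∈ X, a * x ∈ X) :
    ∀ y ∈ starSubmodule X, ∀ a ∈ A, y * a ∈ starSubmodule X := by
  rintro _ ⟨x, hx, rfl⟩ a ha
  exact ⟨star a * x, hAX _ (star_mem ha) x hx, by simp [star_mul]⟩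

end starSubmodule

section bimodule

omit [NormedStarGroup C]

variable (A : NonUnitalStarSubalgebra ℂ C) (X : Submodule ℂ C)

lemma mulSpan_zpowSet_subalgebra_subset (hAX : ∀ a ∈ A, ∀ x ∈ X, a * x ∈ X)
    (hXA : ∀ x ∈ X, ∀ a ∈ A, x * a ∈ X) (k : ℤ) :
    mulSpan (zpowSet (A : Set C) (X : Set C) k) A ⊆
      closure (zpowSet (A : Set C) (X : Set C) k) := by
  rcases k.eq_zero_or_eq_natCast_succ_or_eq_neg_natCast_succ with rfl | ⟨n, rfl⟩ | ⟨n, rfl⟩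
  · rw [zpowSet_zero]
    exact mulSpan_subset_closure fun _ ha _ hb => mul_mem ha hb
  · rw [zpowSet_natCast_succ]
    exact mulSpan_npowSet_subset_closure hXA n
  · rw [zpowSet_neg_natCast_succ]
    exact mulSpan_npowSet_subset_closure (mul_mem_starSubmodule hAX) n

lemma mulSpan_zpowSet_star_subset (hXA : ∀ x ∈ X, ∀ a ∈ A, x * a ∈ X)
    (hXXs : ∀ x ∈ X, ∀ y ∈ X, x * star y ∈ A) (j : ℤ) :
    mulSpan (zpowSet (A : Set C) (X : Set C) j) ((star ·) '' X) ⊆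
      closure (zpowSet (A : Set C) (X : Set C) (j - 1)) := by
  have hXXs' : mulSpan (X : Set C) ((star ·) '' (X : Set C)) ⊆ closure (A : Set C) :=
    mulSpan_subset_closure <| by
      rintro x hx _ ⟨y, hy, rfl⟩
      exact hXXs x hx y hy
  rcases j.eq_zero_or_eq_natCast_succ_or_eq_neg_natCast_succ with rfl | ⟨n, rfl⟩ | ⟨n, rfl⟩
  · rw [zpowSet_zero, show (0 : ℤ) - 1 = -((0 : ℕ) + 1) by norm_num, zpowSet_neg_natCast_succ]
    refine mulSpan_subset_closure (M := starSubmodule X) ?_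
    rintro a ha _ ⟨x, hx, rfl⟩
    exact ⟨x * star a, hXA x hx _ (star_mem ha), by simp [star_mul]⟩
  · rw [zpowSet_natCast_succ, add_sub_cancel_right]
    rcases n with _ | n
    · rw [Nat.cast_zero, zpowSet_zero]
      exact hXXs'
    · rw [Nat.cast_succ, zpowSet_natCast_succ]
      calc mulSpan (mulSpan (npowSet (X : Set C) n) X) ((star ·) '' (X : Set C))
          = mulSpan (npowSet (X : Set C) n) (mulSpan X ((star ·) '' (X : Set C))) := mulSpan_assoc
        _ ⊆ mulSpan (npowSet (X : Set C) n) (closure A) := mulSpan_mono subset_rfl hXXs'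
        _ = mulSpan (npowSet (X : Set C) n) A := mulSpan_closure_right
        _ ⊆ closure (npowSet (X : Set C) n) := mulSpan_npowSet_subset_closure hXA n
  · rw [zpowSet_neg_natCast_succ,
      show -((n : ℤ) + 1) - 1 = -(((n + 1 : ℕ) : ℤ) + 1) by push_cast; ring,
      zpowSet_neg_natCast_succ]
    exact subset_closure

lemma mulSpan_zpowSet_subset (hAX : ∀ a ∈ A, ∀ x ∈ X, a * x ∈ X)
    (hXsX : ∀ x ∈ X, ∀ y ∈ X, star x * y ∈ A) (j : ℤ) :
    mulSpan (zpowSet (A : Set C) (X : Set C) j) X ⊆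
      closure (zpowSet (A : Set C) (X : Set C) (j + 1)) := by
  have h := mulSpan_zpowSet_star_subset A (starSubmodule X) (mul_mem_starSubmodule hAX)
    (by rintro _ ⟨x, hx, rfl⟩ _ ⟨y, hy, rfl⟩; simpa using hXsX x hx y hy) (-j)
  rwa [coe_starSubmodule, zpowSet_star_neg, show -j - 1 = -(j + 1) by ring, zpowSet_star_neg,
    Set.image_image, funext star_star, Set.image_id'] at h

end bimodule

/-- `X^k · X^l ⊆ closure (X^(k+l))` for all integers `k, l`. -/
theorem zpowSet_mul_subset (A : NonUnitalStarSubalgebra ℂ C) (X : Submodule ℂ C)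
    (hAX : ∀ a ∈ A, ∀ x ∈ X, a * x ∈ X) (hXA : ∀ x ∈ X, ∀ a ∈ A, x * a ∈ X)
    (hXsX : ∀ x ∈ X, ∀ y ∈ X, star x * y ∈ A) (hXXs : ∀ x ∈ X, ∀ y ∈ X, x * star y ∈ A) (k l : ℤ) :
    mulSpan (zpowSet (A : Set C) (X : Set C) k) (zpowSet (A : Set C) (X : Set C) l)
      ⊆ closure (zpowSet (A : Set C) (X : Set C) (k + l)) := by
  rcases l.eq_zero_or_eq_natCast_succ_or_eq_neg_natCast_succ with rfl | ⟨n, rfl⟩ | ⟨n, rfl⟩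
  · rw [zpowSet_zero, add_zero]
    exact mulSpan_zpowSet_subalgebra_subset A X hAX hXA k
  · rw [zpowSet_natCast_succ]
    have h := mulSpan_npowSet_subset_of_mulSpan_subset (mulSpan_zpowSet_subset A X hAX hXsX) k n
    rwa [mul_one] at h
  · rw [zpowSet_neg_natCast_succ]
    have h := mulSpan_npowSet_subset_of_mulSpan_subset (d := -1) (fun j => by
      simpa only [← sub_eq_add_neg] using mulSpan_zpowSet_star_subset A X hXA hXXs j) k n
    rwa [mul_neg_one] at h
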